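/- arXiv:math/0402148 — 4 statements merged into one kernel-verified Lean document; each statement's English description precedes it below -/
import Mathlib

section
/- Let p(n) = Σ_{j=0}^{d} a_j * C(d+n-j, d) with all a_j ≥ 0 and not all zero. Then for all integers 0 ≤ k < ℓ ≤ d, we have C(d,ℓ) * Δ^k p(0) ≤ C(d,k) * Δ^ℓ p(0). -/
/-- Polynomial binomial coefficient `C(x, r) = x(x-1)⋯(x-r+1)/r!`. -/
noncomputable def binC (x : ℝ) (r : ℕ) : ℝ :=
  (∏ k ∈ Finset.range r, (x - k)) / (r.factorial)

/-- Forward difference operator. -/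
noncomputable def fdiff (f : ℝ → ℝ) : ℝ → ℝ := fun n => f (n + 1) - f n

lemma nat_ineq (d m s t : ℕ) (hst : s ≤ t) (htd : t ≤ d) (hmd : m ≤ d) :
    d.choose s * m.choose t ≤ d.choose t * m.choose s := by
  rcases le_or_gt t m with h | h
  · have hpos : 0 < t.choose s := Nat.choose_pos hst
    have key : d.choose s * m.choose t * t.choose s ≤ d.choose t * m.choose s * t.choose s := by
      have h1 : m.choose t * t.choose s = m.choose s * (m - s).choose (t - s) :=
        Nat.choose_mul hst
      have h2 : d.choose t * t.choose s = d.choose s * (d - s).choose (t - s) :=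
        Nat.choose_mul hst
      calc d.choose s * m.choose t * t.choose s
          = d.choose s * (m.choose s * (m - s).choose (t - s)) := by rw [mul_assoc, h1]
        _ ≤ d.choose s * (m.choose s * (d - s).choose (t - s)) := by
            apply Nat.mul_le_mul_left
            exact Nat.mul_le_mul_left _ (Nat.choose_le_choose _ (by omega))
        _ = d.choose s * (d - s).choose (t - s) * m.choose s := by ring
        _ = d.choose t * t.choose s * m.choose s := by rw [h2]
        _ = d.choose t * m.choose s * t.choose s := by ring
    exact Nat.le_of_mul_le_mul_right key hpos
  · simp [Nat.choose_eq_zero_of_lt h]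

lemma binC_nat (m r : ℕ) : binC (m : ℝ) r = (m.choose r : ℝ) := by
  have hprod : (∏ k ∈ Finset.range r, ((m : ℝ) - k)) = (m.descFactorial r : ℝ) := by
    rcases le_or_gt r (m + 1) with h | h
    · rw [Nat.descFactorial_eq_prod_range, Nat.cast_prod]
      refine Finset.prod_congr rfl fun k hk => ?_
      have : k ≤ m := by
        have := Finset.mem_range.mp hk; omega
      rw [Nat.cast_sub this]
    · have hz : (∏ k ∈ Finset.range r, ((m : ℝ) - k)) = 0 :=
        Finset.prod_eq_zero (i := m) (Finset.mem_range.mpr (by omega)) (by simp)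
      rw [hz, Nat.descFactorial_eq_zero_iff_lt.mpr (by omega), Nat.cast_zero]
  rw [binC, hprod, Nat.descFactorial_eq_factorial_mul_choose]
  have : (r.factorial : ℝ) ≠ 0 := by positivity
  push_cast
  field_simp

lemma binC_pascal (x : ℝ) (r : ℕ) : binC (x + 1) (r + 1) - binC x (r + 1) = binC x r := by
  have h1 : (∏ k ∈ Finset.range (r + 1), (x + 1 - k)) =
      (∏ k ∈ Finset.range r, (x - k)) * (x + 1) := by
    rw [Finset.prod_range_succ']
    congr 1
    refine Finset.prod_congr rfl fun k _ => ?_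
    push_cast; ring
    · simp
  have h2 : (∏ k ∈ Finset.range (r + 1), (x - k)) =
      (∏ k ∈ Finset.range r, (x - k)) * (x - r) := Finset.prod_range_succ _ _
  have hfac : ((r + 1).factorial : ℝ) = (r + 1) * r.factorial := by
    rw [Nat.factorial_succ]; push_cast; ring
  have h3 : (r.factorial : ℝ) ≠ 0 := by positivity
  have h4 : ((r : ℝ) + 1) ≠ 0 := by positivity
  rw [binC, binC, binC, h1, h2, hfac]
  field_simp
  ring

theorem stmt_1 (d : ℕ) (a : ℕ → ℝ)
    (ha : ∀ j, 0 ≤ a j) (hne : ∃ j ∈ Finset.range (d + 1), a j ≠ 0)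
    (p : ℝ → ℝ)
    (hp : ∀ n : ℝ, p n = ∑ j ∈ Finset.range (d + 1), a j * binC ((d : ℝ) + n - j) d)
    (k ℓ : ℕ) (hkl : k < ℓ) (hld : ℓ ≤ d) :
    (d.choose ℓ : ℝ) * (fdiff^[k] p) 0 ≤ (d.choose k : ℝ) * (fdiff^[ℓ] p) 0 := by
  have key : ∀ m : ℕ, m ≤ d → ∀ n : ℝ,
      (fdiff^[m] p) n = ∑ j ∈ Finset.range (d + 1), a j * binC ((d : ℝ) + n - j) (d - m) := by
    intro m
    induction m with
    | zero => intro _ n; simpa using hp n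
    | succ i ih =>
      intro hi n
      rw [Function.iterate_succ_apply', fdiff, ih (by omega), ih (by omega),
        ← Finset.sum_sub_distrib]
      refine Finset.sum_congr rfl fun j _ => ?_
      rw [← mul_sub]
      congr 1
      have hd : d - i = (d - (i + 1)) + 1 := by omega
      have hx : (d : ℝ) + (n + 1) - j = ((d : ℝ) + n - j) + 1 := by ring
      rw [hd, hx, binC_pascal]
  have hval : ∀ m : ℕ, m ≤ d →
      (fdiff^[m] p) 0 = ∑ j ∈ Finset.range (d + 1), a j * ((d - j).choose (d - m) : ℝ) := by
    intro m hm
    rw [key m hm 0]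
    refine Finset.sum_congr rfl fun j hj => ?_
    have hj' : j ≤ d := by have := Finset.mem_range.mp hj; omega
    have : (d : ℝ) + 0 - j = ((d - j : ℕ) : ℝ) := by
      rw [Nat.cast_sub hj']; ring
    rw [this, binC_nat]
  rw [hval k (by omega), hval ℓ hld, Finset.mul_sum, Finset.mul_sum]
  refine Finset.sum_le_sum fun j hj => ?_
  have hj' : j ≤ d := by have := Finset.mem_range.mp hj; omega
  have hnat : d.choose (d - ℓ) * (d - j).choose (d - k) ≤
      d.choose (d - k) * (d - j).choose (d - ℓ) :=
    nat_ineq d (d - j) (d - ℓ) (d - k) (by omega) (by omega) (by omega)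
  have hsymm1 : d.choose (d - ℓ) = d.choose ℓ := Nat.choose_symm hld
  have hsymm2 : d.choose (d - k) = d.choose k := Nat.choose_symm (by omega)
  rw [hsymm1, hsymm2] at hnat
  have : (d.choose ℓ : ℝ) * ((d - j).choose (d - k) : ℝ) ≤
      (d.choose k : ℝ) * ((d - j).choose (d - ℓ) : ℝ) := by
    exact_mod_cast hnat
  calc (d.choose ℓ : ℝ) * (a j * ((d - j).choose (d - k) : ℝ))
      = a j * ((d.choose ℓ : ℝ) * ((d - j).choose (d - k) : ℝ)) := by ring
    _ ≤ a j * ((d.choose k : ℝ) * ((d - j).choose (d - ℓ) : ℝ)) :=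
        mul_le_mul_of_nonneg_left this (ha j)
    _ = (d.choose k : ℝ) * (a j * ((d - j).choose (d - ℓ) : ℝ)) := by ring
end

section
/- Let f(n) = p n^4 + q n^3 + r n^2 + s n + 1 be a real polynomial with p > 0, q ≥ 0, f(1) ≥ 5, and f(-1) ≥ 0. Then f has no real root α with α ≥ 1. -/
theorem stmt_9 (p q r s : ℝ) (hp : 0 < p) (hq : 0 ≤ q)
    (f : ℝ → ℝ)
    (hf : ∀ n : ℝ, f n = p * n ^ 4 + q * n ^ 3 + r * n ^ 2 + s * n + 1)
    (h1 : 5 ≤ f 1) (hm1 : 0 ≤ f (-1)) :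
    ∀ α : ℝ, 1 ≤ α → f α ≠ 0 := by
  intro α hα h
  simp only [hf] at h h1 hm1
  have ht : 0 ≤ α - 1 := by linarith
  nlinarith [mul_nonneg (mul_nonneg (mul_nonneg ht ht) ht) ht,
    mul_nonneg (mul_nonneg ht ht) ht, mul_nonneg ht ht,
    mul_nonneg hp.le (mul_nonneg (mul_nonneg (mul_nonneg ht ht) ht) ht),
    mul_nonneg hq (mul_nonneg (mul_nonneg ht ht) ht),
    mul_nonneg hp.le (mul_nonneg (mul_nonneg ht ht) ht),
    mul_nonneg hp.le (mul_nonneg ht ht), mul_nonneg hq (mul_nonneg ht ht),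
    mul_nonneg hp.le ht, mul_nonneg hq ht]
end

section
/- Let t_1, ..., t_d be distinct integers and λ_1, ..., λ_d real numbers. If Σ_{k=1}^d λ_k t_k^j is an integer for every 1 ≤ j ≤ d-1, and also Σ_{k=1}^d λ_k = 1 (affine combination), then Σ_{k=1}^d λ_k t_k^d is an integer. -/
theorem stmt_12 (d : ℕ) (hd : 1 ≤ d) (t : Fin d → ℤ) (ht : Function.Injective t)
    (lam : Fin d → ℝ)
    (hint : ∀ j : ℕ, 1 ≤ j → j ≤ d - 1 →
      ∃ m : ℤ, ∑ k, lam k * ((t k : ℝ)) ^ j = (m : ℝ))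
    (haff : ∑ k, lam k = 1) :
    ∃ m : ℤ, ∑ k, lam k * ((t k : ℝ)) ^ d = (m : ℝ) := by
  classical
  set P : Polynomial ℤ := ∏ k, (Polynomial.X - Polynomial.C (t k)) with hP
  have hmonic : P.Monic :=
    Polynomial.monic_prod_of_monic _ _ fun k _ => Polynomial.monic_X_sub_C _
  have hdeg : P.natDegree = d := by
    rw [hP, Polynomial.natDegree_prod_of_monic _ _ (fun k _ => Polynomial.monic_X_sub_C _)]
    simp only [Polynomial.natDegree_X_sub_C]
    simp
  have hroot : ∀ k, P.eval (t k) = 0 := by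
    intro k
    rw [hP, Polynomial.eval_prod]
    exact Finset.prod_eq_zero (Finset.mem_univ k) (by simp)
  have hg : ∀ i : ℕ, ∃ m : ℤ, i ≤ d - 1 → ∑ k, lam k * ((t k : ℝ)) ^ i = (m : ℝ) := by
    intro i
    rcases Nat.eq_zero_or_pos i with h0 | h1
    · exact ⟨1, fun _ => by subst h0; simpa using haff⟩
    · rcases Nat.lt_or_ge (d - 1) i with h | h
      · exact ⟨0, fun hi => absurd hi (by omega)⟩
      · obtain ⟨m, hm⟩ := hint i h1 h
        exact ⟨m, fun _ => hm⟩
  choose g hgspec using hg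
  have hkey : ∀ k, ((t k : ℝ)) ^ d
      = ∑ i ∈ Finset.range d, (-(P.coeff i) : ℝ) * ((t k : ℝ)) ^ i := by
    intro k
    have h0 : ((P.eval (t k) : ℤ) : ℝ) = 0 := by rw [hroot k]; norm_num
    have hsum : P.eval (t k) = ∑ i ∈ Finset.range (d + 1), P.coeff i * (t k) ^ i := by
      rw [Polynomial.eval_eq_sum_range, hdeg]
    have hcd : P.coeff d = 1 := by rw [← hdeg]; exact hmonic.coeff_natDegree
    rw [hsum, Finset.sum_range_succ, hcd] at h0
    push_cast at h0
    have : (∑ i ∈ Finset.range d, (-(P.coeff i) : ℝ) * ((t k : ℝ)) ^ i)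
        = -∑ i ∈ Finset.range d, ((P.coeff i : ℝ)) * ((t k : ℝ)) ^ i := by
      rw [← Finset.sum_neg_distrib]
      exact Finset.sum_congr rfl fun i _ => by ring
    rw [this]
    linarith
  refine ⟨∑ i ∈ Finset.range d, -(P.coeff i) * g i, ?_⟩
  have step1 : ∑ k, lam k * ((t k : ℝ)) ^ d
      = ∑ i ∈ Finset.range d, (-(P.coeff i) : ℝ) * ∑ k, lam k * ((t k : ℝ)) ^ i := by
    simp_rw [hkey, Finset.mul_sum]
    rw [Finset.sum_comm]
    refine Finset.sum_congr rfl fun i _ => ?_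
    exact Finset.sum_congr rfl fun k _ => by ring
  rw [step1]
  push_cast
  refine Finset.sum_congr rfl fun i hi => ?_
  have hi' : i < d := Finset.mem_range.mp hi
  rw [hgspec i (by omega)]
end

section
/- For integers d ≥ 1, 0 ≤ ℓ ≤ d, and 0 ≤ i, with B any real number, the difference g_i(B, ℓ) - g_{i+1}(B, ℓ) equals d · Σ over (d-ℓ-1)-subsets J of {1,...,d-1} of Π_{k ∈ J} (B + d - i - k), where g_i(n, ℓ) = Σ_{I ⊆ {0,...,d-1}, |I|=d-ℓ} Π_{k ∈ I}(n + d - i - k). -/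
/-!
`g d i ℓ n` is the elementary symmetric function `e_{d-ℓ}` of the multiset
`{n + d - i - k : 0 ≤ k < d}`, and replacing `i` by `i + 1` turns it into
`{n + d - i - k : 1 ≤ k ≤ d}`. Both are `s = {n + d - i - k : 1 ≤ k ≤ d - 1}` plus one element,
`n + d - i` resp. `n - i`, and `e_{m+1}(a ::ₘ s) = e_{m+1}(s) + a e_m(s)` makes the difference
`(a - b) e_m(s) = d e_m(s)`.
-/

/-- `g d i ℓ n = Σ_{I ⊆ {0,…,d-1}, |I| = d-ℓ} Π_{k ∈ I} (n + d - i - k)`. -/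
noncomputable def g (d i ℓ : ℕ) (n : ℝ) : ℝ :=
  ∑ I ∈ (Finset.range d).powersetCard (d - ℓ), ∏ k ∈ I, (n + d - i - k)

namespace Multiset

variable {R : Type*}

theorem esymm_cons_succ [CommSemiring R] (a : R) (s : Multiset R) (n : ℕ) :
    (a ::ₘ s).esymm (n + 1) = s.esymm (n + 1) + a * s.esymm n := by
  simp only [esymm, powersetCard_cons, map_add, map_map, Function.comp_apply, prod_cons, sum_add,
    sum_map_mul_left]

theorem esymm_cons_sub_esymm_cons [CommRing R] (a b : R) (s : Multiset R) (n : ℕ) :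
    (a ::ₘ s).esymm (n + 1) - (b ::ₘ s).esymm (n + 1) = (a - b) * s.esymm n := by
  rw [esymm_cons_succ, esymm_cons_succ]
  ring

end Multiset

open Finset

theorem g_eq_esymm (d i ℓ : ℕ) (n : ℝ) :
    g d i ℓ n = ((range d).val.map fun k : ℕ => n + d - i - k).esymm (d - ℓ) :=
  (esymm_map_val _ _ _).symm

theorem g_succ_eq_esymm (d i ℓ : ℕ) (n : ℝ) :
    g d (i + 1) ℓ n =
      (((range d).map (addRightEmbedding 1)).val.map fun k : ℕ => n + d - i - k).esymm (d - ℓ) := by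
  rw [g_eq_esymm, map_val, Multiset.map_map]
  congr 2
  funext k
  simp only [Function.comp_apply, addRightEmbedding_apply]
  push_cast
  ring

theorem range_eq_insert_zero_Icc {d : ℕ} (hd : 1 ≤ d) : range d = insert 0 (Icc 1 (d - 1)) := by
  ext k
  simp only [mem_range, mem_insert, mem_Icc]
  omega

theorem map_range_add_one_eq_insert_Icc {d : ℕ} (hd : 1 ≤ d) :
    (range d).map (addRightEmbedding 1) = insert d (Icc 1 (d - 1)) := by
  rw [range_eq_Ico, map_add_right_Ico]
  ext k
  simp only [mem_Ico, mem_insert, mem_Icc]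
  omega

theorem stmt_19 (d : ℕ) (hd : 1 ≤ d) (ℓ : ℕ) (hℓ : ℓ ≤ d - 1) (i : ℕ) (B : ℝ) :
    g d i ℓ B - g d (i + 1) ℓ B =
      (d : ℝ) * ∑ J ∈ (Finset.Icc 1 (d - 1)).powersetCard (d - ℓ - 1),
        ∏ k ∈ J, (B + d - i - k) := by
  obtain ⟨m, hm⟩ : ∃ m, d - ℓ = m + 1 := ⟨d - ℓ - 1, by omega⟩
  have h₀ : 0 ∉ Icc 1 (d - 1) := by simp
  have h_d : d ∉ Icc 1 (d - 1) := by simp only [mem_Icc]; omega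
  rw [g_eq_esymm, g_succ_eq_esymm, map_range_add_one_eq_insert_Icc hd, range_eq_insert_zero_Icc hd,
    insert_val_of_notMem h₀, insert_val_of_notMem h_d, Multiset.map_cons, Multiset.map_cons, hm,
    Multiset.esymm_cons_sub_esymm_cons, esymm_map_val, Nat.add_sub_cancel]
  push_cast
  ring
end
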